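/- Let f : ℝ → ℝ be continuous, 2π-periodic, and satisfy f(ω) > 0 for every ω, and define its Fourier coefficients b_i = (1/2π)∫_{-π}^{π} f(ω) e^{iωi} dω ∈ ℂ for i ∈ ℤ. Then for every integer L ≥ 1, the L×L Toeplitz matrix B with entries (B)_{jk} = b_{k−j} is Hermitian and positive definite (in particular invertible). -/

import Mathlib

open Matrix
open scoped BigOperators ComplexOrder

/-- `L×L` Toeplitz matrix with entries `(B)_{jk} = b_{k-j}`. -/
noncomputable def toeplitz (L : ℕ) (b : ℤ → ℂ) : Matrix (Fin L) (Fin L) ℂ :=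
  fun j k => b ((k : ℤ) - (j : ℤ))

/-!
Writing `p(ω) = ∑ₖ xₖ e^{ikω}`, the quadratic form of the Toeplitz matrix is an integral against
the symbol: `x† B x = (2π)⁻¹ ∫ f(ω) |p(ω)|² dω`. On `[-π, π]` the symbol is bounded below by its
minimum `m > 0`, and orthogonality of the exponentials gives `∫ |p|² = 2π ∑ₖ |xₖ|²`, so
`x† B x ≥ m ∑ₖ |xₖ|² > 0` for `x ≠ 0`. Hermitian symmetry is `b₋ᵢ = conj bᵢ`, which holds because
`f` is real.
-/

open Complex intervalIntegral
open scoped Real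

noncomputable def symbolCoeff (f : ℝ → ℝ) (i : ℤ) : ℂ :=
  (1 / (2 * π)) • ∫ ω in (-π)..π, (f ω : ℂ) * exp (I * i * ω)

theorem star_symbolCoeff (f : ℝ → ℝ) (i : ℤ) : star (symbolCoeff f i) = symbolCoeff f (-i) := by
  simp only [symbolCoeff, star_smul, star_trivial, ← intervalIntegral_conj, RCLike.star_def,
    map_mul, conj_ofReal, ← exp_conj, conj_I, map_intCast, Int.cast_neg, neg_mul, mul_neg]

theorem toeplitz_isHermitian {L : ℕ} {b : ℤ → ℂ} (hb : ∀ i, star (b i) = b (-i)) :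
    (toeplitz L b).IsHermitian := by
  ext j k
  simp only [conjTranspose_apply, toeplitz, hb, neg_sub]

theorem integral_exp_I_mul_int (n : ℤ) :
    ∫ ω in (-π)..π, exp (I * n * ω) = if n = 0 then 2 * (π : ℂ) else 0 := by
  split_ifs with hn
  · simp only [hn, Int.cast_zero, mul_zero, zero_mul, exp_zero, integral_const, sub_neg_eq_add,
      real_smul, ofReal_add, mul_one]
    ring
  · have hc : I * n ≠ 0 := mul_ne_zero I_ne_zero (Int.cast_ne_zero.mpr hn)
    have hper : exp (I * n * π) = exp (I * n * (-π : ℝ)) := by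
      rw [exp_eq_exp_iff_exists_int]
      exact ⟨n, by push_cast; ring⟩
    rw [integral_exp_mul_complex hc, hper, sub_self, zero_div]

noncomputable def trigPoly {L : ℕ} (x : Fin L → ℂ) (ω : ℝ) : ℂ :=
  ∑ k, x k * exp (I * ((k : ℤ) : ℂ) * ω)

theorem continuous_trigPoly {L : ℕ} (x : Fin L → ℂ) : Continuous (trigPoly x) := by
  unfold trigPoly
  fun_prop

theorem star_trigPoly_mul_trigPoly {L : ℕ} (x : Fin L → ℂ) (ω : ℝ) :
    star (trigPoly x ω) * trigPoly x ω =
      ∑ j, ∑ k, star (x j) * x k * exp (I * (((k : ℤ) - j : ℤ) : ℂ) * ω) := by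
  simp only [trigPoly, star_sum, Finset.sum_mul_sum, star_mul', RCLike.star_def, ← exp_conj,
    map_mul, conj_I, conj_ofReal, map_intCast]
  refine Finset.sum_congr rfl fun j _ => Finset.sum_congr rfl fun k _ => ?_
  rw [mul_mul_mul_comm, ← exp_add]
  push_cast
  ring_nf

theorem integral_mul_star_trigPoly_mul_trigPoly {L : ℕ} {g : ℝ → ℂ} {a b : ℝ}
    (hg : IntervalIntegrable g MeasureTheory.volume a b) (x : Fin L → ℂ) :
    ∫ ω in a..b, g ω * (star (trigPoly x ω) * trigPoly x ω) =
      ∑ j, ∑ k, star (x j) * x k * ∫ ω in a..b, g ω * exp (I * (((k : ℤ) - j : ℤ) : ℂ) * ω) := by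
  have hint (j k : Fin L) : IntervalIntegrable
      (fun ω : ℝ => star (x j) * x k * (g ω * exp (I * (((k : ℤ) - j : ℤ) : ℂ) * ω)))
      MeasureTheory.volume a b :=
    (hg.mul_continuousOn (by fun_prop)).const_mul _
  calc ∫ ω in a..b, g ω * (star (trigPoly x ω) * trigPoly x ω)
      = ∫ ω in a..b, ∑ j, ∑ k,
          star (x j) * x k * (g ω * exp (I * (((k : ℤ) - j : ℤ) : ℂ) * ω)) := by
        refine integral_congr fun ω _ => ?_
        simp only [star_trigPoly_mul_trigPoly, Finset.mul_sum]
        exact Finset.sum_congr rfl fun j _ => Finset.sum_congr rfl fun k _ => by ring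
    _ = _ := by
        have hrow (j : Fin L) := IntervalIntegrable.sum Finset.univ fun k _ => hint j k
        simp only [Finset.sum_fn] at hrow
        rw [integral_finsetSum fun j _ => hrow j]
        simp only [integral_finsetSum fun k _ => hint _ k, integral_const_mul]

theorem integral_normSq_trigPoly {L : ℕ} (x : Fin L → ℂ) :
    ∫ ω in (-π)..π, normSq (trigPoly x ω) = 2 * π * ∑ k, normSq (x k) := by
  apply ofReal_injective
  have h := integral_mul_star_trigPoly_mul_trigPoly (g := 1) (a := -π) (b := π)
    intervalIntegrable_const x
  simp only [Pi.one_apply, one_mul, integral_exp_I_mul_int, sub_eq_zero, Nat.cast_inj,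
    Fin.val_inj, mul_ite, mul_zero, Finset.sum_ite_eq', Finset.mem_univ, if_true] at h
  push_cast
  simp only [← integral_ofReal, normSq_eq_conj_mul_self, ← RCLike.star_def, h, Finset.mul_sum]
  exact Finset.sum_congr rfl fun k _ => by ring

theorem star_dotProduct_toeplitz_mulVec {L : ℕ} (b : ℤ → ℂ) (x : Fin L → ℂ) :
    star x ⬝ᵥ toeplitz L b *ᵥ x = ∑ j, ∑ k, star (x j) * x k * b (k - j) := by
  simp only [dotProduct, mulVec, toeplitz, Pi.star_apply, Finset.mul_sum]
  exact Finset.sum_congr rfl fun j _ => Finset.sum_congr rfl fun k _ => by ring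

theorem star_dotProduct_toeplitz_symbolCoeff_mulVec {L : ℕ} {f : ℝ → ℝ}
    (hf : IntervalIntegrable f MeasureTheory.volume (-π) π) (x : Fin L → ℂ) :
    star x ⬝ᵥ toeplitz L (symbolCoeff f) *ᵥ x =
      ((1 / (2 * π) * ∫ ω in (-π)..π, f ω * normSq (trigPoly x ω) : ℝ) : ℂ) := by
  have h := integral_mul_star_trigPoly_mul_trigPoly (g := fun ω => (f ω : ℂ))
    ⟨hf.1.ofReal, hf.2.ofReal⟩ x
  push_cast
  simp only [← integral_ofReal, ofReal_mul, normSq_eq_conj_mul_self, ← RCLike.star_def, h,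
    star_dotProduct_toeplitz_mulVec, symbolCoeff, Finset.mul_sum, Complex.real_smul]
  exact Finset.sum_congr rfl fun j _ => Finset.sum_congr rfl fun k _ => by push_cast; ring

theorem integral_mul_normSq_trigPoly_pos {L : ℕ} {f : ℝ → ℝ}
    (hf : ContinuousOn f (Set.Icc (-π) π)) (hpos : ∀ ω ∈ Set.Icc (-π) π, 0 < f ω)
    {x : Fin L → ℂ} (hx : x ≠ 0) :
    0 < ∫ ω in (-π)..π, f ω * normSq (trigPoly x ω) := by
  have hπ : -π ≤ π := by linarith [Real.pi_pos]
  obtain ⟨ω₀, hω₀, hmin⟩ := isCompact_Icc.exists_isMinOn (Set.nonempty_Icc.mpr hπ) hf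
  obtain ⟨k₀, hk₀⟩ := Function.ne_iff.mp hx
  have hx_normSq : 0 < ∑ k, normSq (x k) :=
    Finset.sum_pos' (fun k _ => normSq_nonneg _) ⟨k₀, Finset.mem_univ _, normSq_pos.mpr hk₀⟩
  have hp : Continuous fun ω => normSq (trigPoly x ω) :=
    continuous_normSq.comp (continuous_trigPoly x)
  calc 0 < f ω₀ * (2 * π * ∑ k, normSq (x k)) := by have := hpos ω₀ hω₀; positivity
    _ = ∫ ω in (-π)..π, f ω₀ * normSq (trigPoly x ω) := by
      rw [integral_const_mul, integral_normSq_trigPoly]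
    _ ≤ ∫ ω in (-π)..π, f ω * normSq (trigPoly x ω) :=
      integral_mono_on hπ (hp.intervalIntegrable _ _ |>.const_mul _)
        ((hf.mul hp.continuousOn).intervalIntegrable_of_Icc hπ)
        fun ω hω => mul_le_mul_of_nonneg_right (hmin hω) (normSq_nonneg _)

theorem toeplitz_posdef_of_positive_symbol_general
    (f : ℝ → ℝ) (hfcont : Continuous f)
    (hfpos : ∀ ω : ℝ, 0 < f ω)
    (b : ℤ → ℂ)
    (hb : ∀ i : ℤ, b i = (1 / (2 * Real.pi)) •
      ∫ ω in (-Real.pi)..Real.pi, (f ω : ℂ) * Complex.exp (Complex.I * i * ω))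
    (L : ℕ) :
    (toeplitz L b).IsHermitian ∧ (toeplitz L b).PosDef ∧ IsUnit (toeplitz L b) := by
  obtain rfl : b = symbolCoeff f := funext hb
  have herm : (toeplitz L (symbolCoeff f)).IsHermitian := toeplitz_isHermitian (star_symbolCoeff f)
  have posdef : (toeplitz L (symbolCoeff f)).PosDef := by
    refine posDef_iff_dotProduct_mulVec.mpr ⟨herm, fun x hx => ?_⟩
    rw [star_dotProduct_toeplitz_symbolCoeff_mulVec (hfcont.intervalIntegrable _ _),
      Complex.zero_lt_real]
    exact mul_pos (by positivity)
      (integral_mul_normSq_trigPoly_pos hfcont.continuousOn (fun ω _ => hfpos ω) hx)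
  exact ⟨herm, posdef, posdef.isUnit⟩

/-- The Toeplitz matrix built from the Fourier coefficients of a
continuous, `2π`-periodic, strictly positive function is Hermitian positive
definite, in particular invertible. -/
theorem toeplitz_posdef_of_positive_symbol
    (f : ℝ → ℝ) (hfcont : Continuous f)
    (hfper : Function.Periodic f (2 * Real.pi))
    (hfpos : ∀ ω : ℝ, 0 < f ω)
    (b : ℤ → ℂ)
    (hb : ∀ i : ℤ, b i = (1 / (2 * Real.pi)) •
      ∫ ω in (-Real.pi)..Real.pi, (f ω : ℂ) * Complex.exp (Complex.I * i * ω))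
    (L : ℕ) (hL : 1 ≤ L) :
    (toeplitz L b).IsHermitian ∧ (toeplitz L b).PosDef ∧ IsUnit (toeplitz L b) :=
  toeplitz_posdef_of_positive_symbol_general f hfcont hfpos b hb L
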